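/- arXiv:1701.04218 — 3 statements merged into one kernel-verified Lean document; each statement's English description precedes it below -/
import Mathlib

section
/- Let m be a nonnegative integer and a, b, c ∈ ℝ. Define 𝔊(x,y,z) = a·Q_{2m+1}(x,y)·sin z + b·Q_{2m+1}(x,z)·sin y + c·Q_{2m}(y,z)·cos x, and let V be the vector field on ℝ³ given by V(x,y,z) = (𝔊(x,y,z), 𝔊(y,z,x), 𝔊(z,x,y)). Then ∇·V(x,y,z) = ((2m+1)·a + (−1)^{m+1}·(2m+1)·b − c)·(Q_{2m}(x,y)·sin z + Q_{2m}(y,z)·sin x + Q_{2m}(z,x)·sin y) for all (x,y,z) ∈ ℝ³. In particular, if (2m+1)·a + (−1)^{m+1}·(2m+1)·b − c = 0, then V is solenoidal: ∇·V = 0. -/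
noncomputable section

open Real

/-- The standard harmonic polynomial `P_n(x,y) = Re((x+iy)^n)`. -/
def polyP (n : ℕ) (x y : ℝ) : ℝ := ((x + y * Complex.I) ^ n).re

/-- The standard harmonic polynomial `Q_n(x,y) = Im((x+iy)^n)`. -/
def polyQ (n : ℕ) (x y : ℝ) : ℝ := ((x + y * Complex.I) ^ n).im

/-- Partial derivative in the `i`-th coordinate direction. -/
def pd (i : Fin 3) (F : (Fin 3 → ℝ) → ℝ) : (Fin 3 → ℝ) → ℝ :=
  fun v => deriv (fun t => F (Function.update v i t)) (v i)

/-- Divergence of a vector field on ℝ³. -/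
def div3 (V : (Fin 3 → ℝ) → (Fin 3 → ℝ)) : (Fin 3 → ℝ) → ℝ :=
  fun v => pd 0 (fun w => V w 0) v + pd 1 (fun w => V w 1) v + pd 2 (fun w => V w 2) v

/-- Curl of a vector field on ℝ³. -/
def curl3 (V : (Fin 3 → ℝ) → (Fin 3 → ℝ)) : (Fin 3 → ℝ) → (Fin 3 → ℝ) :=
  fun v => ![pd 1 (fun w => V w 2) v - pd 2 (fun w => V w 1) v,
             pd 2 (fun w => V w 0) v - pd 0 (fun w => V w 2) v,
             pd 0 (fun w => V w 1) v - pd 1 (fun w => V w 0) v]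

/-- Laplacian of a scalar function on ℝ³. -/
def lap3 (F : (Fin 3 → ℝ) → ℝ) : (Fin 3 → ℝ) → ℝ :=
  fun v => pd 0 (pd 0 F) v + pd 1 (pd 1 F) v + pd 2 (pd 2 F) v

/-! Differentiating `(x+iy)^(2m+1)` in `x` turns `Q_{2m+1}` into `(2m+1) Q_{2m}`, and
`Q_{2m}(y,x) = (-1)^(m+1) Q_{2m}(x,y)` because `y + ix = i·conj(x + iy)`. In the cyclic field `V`
each component is differentiated only in its first argument, so the three partial derivatives
produce the three cyclic terms `Q_{2m}(·,·) sin(·)`, each with coefficient `(2m+1)a`, `(2m+1)b`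
(after the swap) and `-c`. -/

lemma hasDerivAt_polyQ_succ (n : ℕ) (x y : ℝ) :
    HasDerivAt (fun t => polyQ (n + 1) t y) ((n + 1) * polyQ n x y) x := by
  have hpow : HasDerivAt (fun t : ℝ => ((t : ℂ) + y * Complex.I) ^ (n + 1))
      ((n + 1) * ((x : ℂ) + y * Complex.I) ^ n) x := by
    simpa using (((hasDerivAt_id (x : ℂ)).add_const ((y : ℂ) * Complex.I)).pow (n + 1)).comp_ofReal
  simpa [polyQ, Function.comp_def] using Complex.imCLM.hasFDerivAt.comp_hasDerivAt x hpow

lemma polyQ_two_mul_swap (m : ℕ) (x y : ℝ) :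
    polyQ (2 * m) y x = (-1) ^ (m + 1) * polyQ (2 * m) x y := by
  have hswap : (y : ℂ) + x * Complex.I = Complex.I * (starRingEnd ℂ) ((x : ℂ) + y * Complex.I) := by
    simp [Complex.ext_iff]
  have hsign : (-1 : ℂ) ^ m = (((-1 : ℝ) ^ m : ℝ) : ℂ) := by push_cast; ring
  rw [polyQ, polyQ, hswap, mul_pow, ← map_pow, pow_mul, Complex.I_sq, hsign,
    Complex.im_ofReal_mul, Complex.conj_im]
  ring

lemma div3_cyclic (G : ℝ → ℝ → ℝ → ℝ) (v : Fin 3 → ℝ) :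
    div3 (fun w => ![G (w 0) (w 1) (w 2), G (w 1) (w 2) (w 0), G (w 2) (w 0) (w 1)]) v
      = deriv (fun t => G t (v 1) (v 2)) (v 0) + deriv (fun t => G t (v 2) (v 0)) (v 1)
        + deriv (fun t => G t (v 0) (v 1)) (v 2) := by
  simp [div3, pd, Function.update, Fin.ext_iff]

lemma hasDerivAt_combined (m : ℕ) (a b c x y z : ℝ) :
    HasDerivAt
      (fun t => a * polyQ (2 * m + 1) t y * sin z + b * polyQ (2 * m + 1) t z * sin y
        + c * polyQ (2 * m) y z * cos t)
      ((2 * m + 1) * a * polyQ (2 * m) x y * sin z + (2 * m + 1) * b * polyQ (2 * m) x z * sin y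
        - c * polyQ (2 * m) y z * sin x) x := by
  have hQxy := ((hasDerivAt_polyQ_succ (2 * m) x y).const_mul a).mul_const (sin z)
  have hQxz := ((hasDerivAt_polyQ_succ (2 * m) x z).const_mul b).mul_const (sin y)
  have hcos := (hasDerivAt_cos x).const_mul (c * polyQ (2 * m) y z)
  exact ((hQxy.add hQxz).add hcos).congr_deriv (by push_cast; ring)

/-- divergence of the combined field, and the solenoidality criterion. -/
theorem div_formula_combined (m : ℕ) (a b c : ℝ) :
    let G : ℝ → ℝ → ℝ → ℝ := fun x y z =>
      a * polyQ (2 * m + 1) x y * Real.sin z + b * polyQ (2 * m + 1) x z * Real.sin y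
        + c * polyQ (2 * m) y z * Real.cos x
    let V : (Fin 3 → ℝ) → (Fin 3 → ℝ) := fun v =>
      ![G (v 0) (v 1) (v 2), G (v 1) (v 2) (v 0), G (v 2) (v 0) (v 1)]
    (∀ v : Fin 3 → ℝ,
      div3 V v = ((2 * m + 1 : ℝ) * a + (-1 : ℝ) ^ (m + 1) * (2 * m + 1 : ℝ) * b - c) *
        (polyQ (2 * m) (v 0) (v 1) * Real.sin (v 2)
          + polyQ (2 * m) (v 1) (v 2) * Real.sin (v 0)
          + polyQ (2 * m) (v 2) (v 0) * Real.sin (v 1))) ∧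
    ((2 * m + 1 : ℝ) * a + (-1 : ℝ) ^ (m + 1) * (2 * m + 1 : ℝ) * b - c = 0 →
      ∀ v : Fin 3 → ℝ, div3 V v = 0) := by
  intro G V
  have hdiv : ∀ v : Fin 3 → ℝ,
      div3 V v = ((2 * m + 1 : ℝ) * a + (-1 : ℝ) ^ (m + 1) * (2 * m + 1 : ℝ) * b - c) *
        (polyQ (2 * m) (v 0) (v 1) * Real.sin (v 2)
          + polyQ (2 * m) (v 1) (v 2) * Real.sin (v 0)
          + polyQ (2 * m) (v 2) (v 0) * Real.sin (v 1)) := by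
    intro v
    rw [div3_cyclic, (hasDerivAt_combined m a b c _ _ _).deriv,
      (hasDerivAt_combined m a b c _ _ _).deriv, (hasDerivAt_combined m a b c _ _ _).deriv,
      polyQ_two_mul_swap m (v 2) (v 0), polyQ_two_mul_swap m (v 0) (v 1),
      polyQ_two_mul_swap m (v 1) (v 2)]
    ring
  exact ⟨hdiv, fun hcoeff v => by rw [hdiv v, hcoeff, zero_mul]⟩
end
end

section
/- Let ℓ be a nonnegative integer. Define 𝔊(x,y,z) = Q_{4ℓ+3}(x,y)·sin z + Q_{4ℓ+3}(x,z)·sin y + (8ℓ+6)·Q_{4ℓ+2}(y,z)·cos x + Q_{4ℓ+3}(z,x)·cos y − Q_{4ℓ+3}(y,x)·cos z − (8ℓ+6)·P_{4ℓ+2}(y,z)·sin x + (8ℓ+6)(4ℓ+2)·P_{4ℓ+1}(x,y)·cos z − (8ℓ+6)(4ℓ+2)·P_{4ℓ+1}(x,z)·cos y, and let V be the vector field on ℝ³ given by V(x,y,z) = (𝔊(x,y,z), 𝔊(y,z,x), 𝔊(z,x,y)). Then V satisfies the Beltrami equation ∇×V = V. -/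
/-!
The field `V` is built from `G` by cyclically permuting the coordinates, so each component of
`∇×V = V` is the same scalar identity `∂_y G(z,x,y) - ∂_z G(y,z,x) = G(x,y,z)` at permuted
arguments. The partial derivatives of `P_n` and `Q_n` come from differentiating `(x+iy)^n`
(Cauchy–Riemann), and the recursion `(x+iy)^(n+1) = (x+iy)^n (x+iy)` lowers every harmonic
polynomial occurring in the identity to degree `4ℓ`. Since `y+ix = i·conj(x+iy)` and
`i^(4ℓ) = 1`, swapping the arguments fixes `P_{4ℓ}` and negates `Q_{4ℓ}`, after which the identity
is a polynomial identity in `P_{4ℓ}`, `Q_{4ℓ}`, sines and cosines.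
-/

noncomputable section

open Real

section HarmonicPolynomials

open Complex ComplexConjugate

lemma polyP_succ (n : ℕ) (x y : ℝ) : polyP (n + 1) x y = x * polyP n x y - y * polyQ n x y := by
  simp only [polyP, polyQ, pow_succ, mul_re, add_re, add_im, ofReal_re, ofReal_im, mul_re,
    mul_im, I_re, I_im]
  ring

lemma polyQ_succ (n : ℕ) (x y : ℝ) : polyQ (n + 1) x y = x * polyQ n x y + y * polyP n x y := by
  simp only [polyP, polyQ, pow_succ, mul_im, add_re, add_im, ofReal_re, ofReal_im, mul_re,
    mul_im, I_re, I_im]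
  ring

lemma add_mul_I_pow_four_mul_swap (l : ℕ) (x y : ℝ) :
    ((y : ℂ) + x * I) ^ (4 * l) = conj (((x : ℂ) + y * I) ^ (4 * l)) := by
  have h : (y : ℂ) + x * I = I * conj ((x : ℂ) + y * I) := by
    apply Complex.ext <;> simp
  rw [h, mul_pow, map_pow, pow_mul, I_pow_four, one_pow, one_mul]

lemma polyP_four_mul_swap (l : ℕ) (x y : ℝ) : polyP (4 * l) y x = polyP (4 * l) x y := by
  rw [polyP, add_mul_I_pow_four_mul_swap, conj_re, polyP]

lemma polyQ_four_mul_swap (l : ℕ) (x y : ℝ) : polyQ (4 * l) y x = -polyQ (4 * l) x y := by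
  rw [polyQ, add_mul_I_pow_four_mul_swap, conj_im, polyQ]

lemma hasDerivAt_add_mul_I_pow_fst (n : ℕ) (y t : ℝ) :
    HasDerivAt (fun x : ℝ => ((x : ℂ) + y * I) ^ (n + 1)) ((n + 1) * (t + y * I) ^ n) t := by
  simpa using (((hasDerivAt_id (t : ℂ)).add_const (y * I)).pow (n + 1)).comp_ofReal

lemma hasDerivAt_add_mul_I_pow_snd (n : ℕ) (x t : ℝ) :
    HasDerivAt (fun y : ℝ => ((x : ℂ) + y * I) ^ (n + 1)) ((n + 1) * (x + t * I) ^ n * I) t := by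
  simpa using ((((hasDerivAt_id (t : ℂ)).mul_const I).const_add (x : ℂ)).pow (n + 1)).comp_ofReal

lemma hasDerivAt_polyP_fst (n : ℕ) (y t : ℝ) :
    HasDerivAt (fun x => polyP (n + 1) x y) ((n + 1) * polyP n t y) t := by
  have h : HasDerivAt (fun x => polyP (n + 1) x y) _ t :=
    reCLM.hasFDerivAt.comp_hasDerivAt t (hasDerivAt_add_mul_I_pow_fst n y t)
  simpa [polyP] using h

lemma hasDerivAt_polyQ_fst (n : ℕ) (y t : ℝ) :
    HasDerivAt (fun x => polyQ (n + 1) x y) ((n + 1) * polyQ n t y) t := by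
  have h : HasDerivAt (fun x => polyQ (n + 1) x y) _ t :=
    imCLM.hasFDerivAt.comp_hasDerivAt t (hasDerivAt_add_mul_I_pow_fst n y t)
  simpa [polyQ] using h

lemma hasDerivAt_polyP_snd (n : ℕ) (x t : ℝ) :
    HasDerivAt (fun y => polyP (n + 1) x y) (-((n + 1) * polyQ n x t)) t := by
  have h : HasDerivAt (fun y => polyP (n + 1) x y) _ t :=
    reCLM.hasFDerivAt.comp_hasDerivAt t (hasDerivAt_add_mul_I_pow_snd n x t)
  simpa [polyP, polyQ] using h

lemma hasDerivAt_polyQ_snd (n : ℕ) (x t : ℝ) :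
    HasDerivAt (fun y => polyQ (n + 1) x y) ((n + 1) * polyP n x t) t := by
  have h : HasDerivAt (fun y => polyQ (n + 1) x y) _ t :=
    imCLM.hasFDerivAt.comp_hasDerivAt t (hasDerivAt_add_mul_I_pow_snd n x t)
  simpa [polyP, polyQ] using h

end HarmonicPolynomials

/-- The scalar function `𝔊` whose cyclic permutations are the components of `V`. -/
def tetrahedralG (l : ℕ) (x y z : ℝ) : ℝ :=
  polyQ (4 * l + 3) x y * Real.sin z + polyQ (4 * l + 3) x z * Real.sin y
    + (8 * l + 6 : ℝ) * polyQ (4 * l + 2) y z * Real.cos x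
    + polyQ (4 * l + 3) z x * Real.cos y - polyQ (4 * l + 3) y x * Real.cos z
    - (8 * l + 6 : ℝ) * polyP (4 * l + 2) y z * Real.sin x
    + (8 * l + 6 : ℝ) * (4 * l + 2 : ℝ) * polyP (4 * l + 1) x y * Real.cos z
    - (8 * l + 6 : ℝ) * (4 * l + 2 : ℝ) * polyP (4 * l + 1) x z * Real.cos y

lemma hasDerivAt_tetrahedralG_snd (l : ℕ) (a b c : ℝ) :
    HasDerivAt (fun t => tetrahedralG l a t c)
      ((4 * l + 3) * polyP (4 * l + 2) a b * sin c + polyQ (4 * l + 3) a c * cos b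
        + (8 * l + 6) * (4 * l + 2) * polyQ (4 * l + 1) b c * cos a
        - polyQ (4 * l + 3) c a * sin b - (4 * l + 3) * polyQ (4 * l + 2) b a * cos c
        - (8 * l + 6) * (4 * l + 2) * polyP (4 * l + 1) b c * sin a
        - (8 * l + 6) * (4 * l + 2) * (4 * l + 1) * polyQ (4 * l) a b * cos c
        + (8 * l + 6) * (4 * l + 2) * polyP (4 * l + 1) a c * sin b) b := by
  have h := ((((((((hasDerivAt_polyQ_snd (4 * l + 2) a b).mul_const (sin c)).add
    ((hasDerivAt_sin b).const_mul (polyQ (4 * l + 3) a c))).add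
    (((hasDerivAt_polyQ_fst (4 * l + 1) c b).const_mul (8 * l + 6 : ℝ)).mul_const (cos a))).add
    ((hasDerivAt_cos b).const_mul (polyQ (4 * l + 3) c a))).sub
    ((hasDerivAt_polyQ_fst (4 * l + 2) a b).mul_const (cos c))).sub
    (((hasDerivAt_polyP_fst (4 * l + 1) c b).const_mul (8 * l + 6 : ℝ)).mul_const (sin a))).add
    (((hasDerivAt_polyP_snd (4 * l) a b).const_mul
      ((8 * l + 6 : ℝ) * (4 * l + 2))).mul_const (cos c))).sub
    ((hasDerivAt_cos b).const_mul ((8 * l + 6 : ℝ) * (4 * l + 2) * polyP (4 * l + 1) a c))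
  refine h.congr_deriv ?_
  push_cast
  ring

lemma hasDerivAt_tetrahedralG_thd (l : ℕ) (a b c : ℝ) :
    HasDerivAt (fun t => tetrahedralG l a b t)
      (polyQ (4 * l + 3) a b * cos c + (4 * l + 3) * polyP (4 * l + 2) a c * sin b
        + (8 * l + 6) * (4 * l + 2) * polyP (4 * l + 1) b c * cos a
        + (4 * l + 3) * polyQ (4 * l + 2) c a * cos b + polyQ (4 * l + 3) b a * sin c
        + (8 * l + 6) * (4 * l + 2) * polyQ (4 * l + 1) b c * sin a
        - (8 * l + 6) * (4 * l + 2) * polyP (4 * l + 1) a b * sin c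
        + (8 * l + 6) * (4 * l + 2) * (4 * l + 1) * polyQ (4 * l) a c * cos b) c := by
  have h := ((((((((hasDerivAt_sin c).const_mul (polyQ (4 * l + 3) a b)).add
    ((hasDerivAt_polyQ_snd (4 * l + 2) a c).mul_const (sin b))).add
    (((hasDerivAt_polyQ_snd (4 * l + 1) b c).const_mul (8 * l + 6 : ℝ)).mul_const (cos a))).add
    ((hasDerivAt_polyQ_fst (4 * l + 2) a c).mul_const (cos b))).sub
    ((hasDerivAt_cos c).const_mul (polyQ (4 * l + 3) b a))).sub
    (((hasDerivAt_polyP_snd (4 * l + 1) b c).const_mul (8 * l + 6 : ℝ)).mul_const (sin a))).add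
    ((hasDerivAt_cos c).const_mul ((8 * l + 6 : ℝ) * (4 * l + 2) * polyP (4 * l + 1) a b))).sub
    (((hasDerivAt_polyP_snd (4 * l) a c).const_mul
      ((8 * l + 6 : ℝ) * (4 * l + 2))).mul_const (cos b))
  refine h.congr_deriv ?_
  push_cast
  ring

lemma tetrahedralG_curl_eq (l : ℕ) (a b c : ℝ) :
    deriv (fun t => tetrahedralG l c a t) b - deriv (fun t => tetrahedralG l b t a) c =
      tetrahedralG l a b c := by
  rw [(hasDerivAt_tetrahedralG_thd l c a b).deriv, (hasDerivAt_tetrahedralG_snd l b c a).deriv,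
    tetrahedralG]
  simp only [show 4 * l + 3 = 4 * l + 1 + 1 + 1 from rfl, show 4 * l + 2 = 4 * l + 1 + 1 from rfl,
    polyP_succ, polyQ_succ, polyP_four_mul_swap l a b, polyP_four_mul_swap l a c,
    polyP_four_mul_swap l b c, polyQ_four_mul_swap l a b, polyQ_four_mul_swap l a c,
    polyQ_four_mul_swap l b c]
  ring

/-- the tetrahedral field of order `4ℓ+3` satisfies `∇×V = V`. -/
theorem beltrami_tetrahedral_second (l : ℕ) :
    let G : ℝ → ℝ → ℝ → ℝ := fun x y z =>
      polyQ (4 * l + 3) x y * Real.sin z + polyQ (4 * l + 3) x z * Real.sin y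
        + (8 * l + 6 : ℝ) * polyQ (4 * l + 2) y z * Real.cos x
        + polyQ (4 * l + 3) z x * Real.cos y - polyQ (4 * l + 3) y x * Real.cos z
        - (8 * l + 6 : ℝ) * polyP (4 * l + 2) y z * Real.sin x
        + (8 * l + 6 : ℝ) * (4 * l + 2 : ℝ) * polyP (4 * l + 1) x y * Real.cos z
        - (8 * l + 6 : ℝ) * (4 * l + 2 : ℝ) * polyP (4 * l + 1) x z * Real.cos y
    let V : (Fin 3 → ℝ) → (Fin 3 → ℝ) := fun v =>
      ![G (v 0) (v 1) (v 2), G (v 1) (v 2) (v 0), G (v 2) (v 0) (v 1)]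
    ∀ v, curl3 V v = V v := by
  intro G V v
  ext i
  fin_cases i <;>
    simp only [curl3, pd, V, Matrix.cons_val, Matrix.cons_val_zero, Matrix.cons_val_one, ne_eq,
      Fin.reduceEq, zero_ne_one, one_ne_zero, not_false_eq_true, Function.update_of_ne,
      Function.update_self, Fin.zero_eta, Fin.mk_one, Fin.reduceFinMk] <;>
    exact tetrahedralG_curl_eq l _ _ _
end
end

section
/- Let ℓ be a nonnegative integer. Define 𝔊(x,y,z) = Q_{4ℓ+3}(x,y)·sin z + Q_{4ℓ+3}(x,z)·sin y + (8ℓ+6)·Q_{4ℓ+2}(y,z)·cos x + Q_{4ℓ+3}(z,x)·cos y − Q_{4ℓ+3}(y,x)·cos z − (8ℓ+6)·P_{4ℓ+2}(y,z)·sin x + (8ℓ+6)(4ℓ+2)·P_{4ℓ+1}(x,y)·cos z − (8ℓ+6)(4ℓ+2)·P_{4ℓ+1}(x,z)·cos y, and let V be the vector field on ℝ³ given by V(x,y,z) = (𝔊(x,y,z), 𝔊(y,z,x), 𝔊(z,x,y)). Then V has tetrahedral symmetry: for ε equal to either of the matrices α = [[1,0,0],[0,−1,0],[0,0,−1]] or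 γ = [[0,1,0],[0,0,1],[1,0,0]], one has ε⁻¹ ∘ V ∘ ε = V (hence this holds for every ε in the tetrahedral group 𝕋 = ⟨α,γ⟩ of order 12). -/
noncomputable section

open Real

lemma key_neg_neg (n : ℕ) (x y : ℝ) :
    ((-x : ℝ) + (-y : ℝ) * Complex.I) ^ n = (-1 : ℂ) ^ n * ((x : ℂ) + y * Complex.I) ^ n := by
  have h : ((-x : ℝ) : ℂ) + ((-y : ℝ) : ℂ) * Complex.I = -((x : ℂ) + y * Complex.I) := by
    push_cast; ring
  rw [h, neg_pow]

lemma key_conj (x y : ℝ) :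
    ((x : ℂ) + ((-y : ℝ) : ℂ) * Complex.I) = (starRingEnd ℂ) ((x : ℂ) + y * Complex.I) := by
  simp [map_add, map_mul, Complex.conj_I]

lemma polyP_neg_neg (n : ℕ) (x y : ℝ) : polyP n (-x) (-y) = (-1 : ℝ)^n * polyP n x y := by
  unfold polyP
  rw [key_neg_neg, show ((-1 : ℂ))^n = (((-1:ℝ)^n : ℝ) : ℂ) by push_cast; ring]
  exact Complex.re_ofReal_mul _ _

lemma polyQ_neg_neg (n : ℕ) (x y : ℝ) : polyQ n (-x) (-y) = (-1 : ℝ)^n * polyQ n x y := by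
  unfold polyQ
  rw [key_neg_neg, show ((-1 : ℂ))^n = (((-1:ℝ)^n : ℝ) : ℂ) by push_cast; ring]
  exact Complex.im_ofReal_mul _ _

lemma polyP_neg_snd (n : ℕ) (x y : ℝ) : polyP n x (-y) = polyP n x y := by
  unfold polyP
  rw [key_conj, ← map_pow, Complex.conj_re]

lemma polyQ_neg_snd (n : ℕ) (x y : ℝ) : polyQ n x (-y) = -polyQ n x y := by
  unfold polyQ
  rw [key_conj, ← map_pow, Complex.conj_im]

lemma polyP_neg_fst (n : ℕ) (x y : ℝ) : polyP n (-x) y = (-1:ℝ)^n * polyP n x y := by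
  rw [← polyP_neg_snd n (-x) y, polyP_neg_neg]

lemma polyQ_neg_fst (n : ℕ) (x y : ℝ) : polyQ n (-x) y = -((-1:ℝ)^n * polyQ n x y) := by
  rw [← neg_neg (polyQ n (-x) y), ← polyQ_neg_snd n (-x) y, polyQ_neg_neg]

open Matrix in
/-- the tetrahedral field of order `4ℓ+3` is invariant under conjugation by
the generators `α`, `γ` of the tetrahedral group `𝕋`. -/
theorem tetrahedral_symmetry_second (l : ℕ) :
    let G : ℝ → ℝ → ℝ → ℝ := fun x y z =>
      polyQ (4 * l + 3) x y * Real.sin z + polyQ (4 * l + 3) x z * Real.sin y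
        + (8 * l + 6 : ℝ) * polyQ (4 * l + 2) y z * Real.cos x
        + polyQ (4 * l + 3) z x * Real.cos y - polyQ (4 * l + 3) y x * Real.cos z
        - (8 * l + 6 : ℝ) * polyP (4 * l + 2) y z * Real.sin x
        + (8 * l + 6 : ℝ) * (4 * l + 2 : ℝ) * polyP (4 * l + 1) x y * Real.cos z
        - (8 * l + 6 : ℝ) * (4 * l + 2 : ℝ) * polyP (4 * l + 1) x z * Real.cos y
    let V : (Fin 3 → ℝ) → (Fin 3 → ℝ) := fun v =>
      ![G (v 0) (v 1) (v 2), G (v 1) (v 2) (v 0), G (v 2) (v 0) (v 1)]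
    let α : Matrix (Fin 3) (Fin 3) ℝ := !![1, 0, 0; 0, -1, 0; 0, 0, -1]
    let γ : Matrix (Fin 3) (Fin 3) ℝ := !![0, 1, 0; 0, 0, 1; 1, 0, 0]
    (∀ v, α⁻¹.mulVec (V (α.mulVec v)) = V v) ∧
    (∀ v, γ⁻¹.mulVec (V (γ.mulVec v)) = V v) := by
  intro G V α γ
  have h3 : ((-1 : ℝ)) ^ (4 * l + 3) = -1 := by rw [pow_add, pow_mul]; norm_num
  have h2 : ((-1 : ℝ)) ^ (4 * l + 2) = 1 := by rw [pow_add, pow_mul]; norm_num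
  have h1 : ((-1 : ℝ)) ^ (4 * l + 1) = -1 := by rw [pow_add, pow_mul]; norm_num
  have hαinv : α⁻¹ = α := by
    apply Matrix.inv_eq_left_inv
    norm_num [α, Matrix.mul_fin_three]; rw [← Matrix.one_fin_three]
  have hγinv : γ⁻¹ = !![0,0,1;1,0,0;0,1,0] := by
    apply Matrix.inv_eq_left_inv
    norm_num [γ, Matrix.mul_fin_three]; rw [← Matrix.one_fin_three]
  constructor
  · intro v
    rw [hαinv]
    funext i
    fin_cases i <;>
      simp [α, V, G, Matrix.mulVec, dotProduct, Fin.sum_univ_three,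
        polyP_neg_neg, polyQ_neg_neg, polyP_neg_snd, polyQ_neg_snd,
        polyP_neg_fst, polyQ_neg_fst, h1, h2, h3] <;> ring
  · intro v
    rw [hγinv]
    funext i
    fin_cases i <;>
      simp [γ, V, G, Matrix.mulVec, dotProduct, Fin.sum_univ_three]
end
end
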